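/- Let q ∈ ℂ with 0 < |q| < 1, and for r, s ∈ ℕ set c_{r,s} = conj(h(Aʳ Bˢ (B*)ˢ (A*)ʳ)) and d_{r,s} = h((B*)ˢ (A*)ʳ Aʳ Bˢ). Then: (i) for all r ≥ 1, c_{r,s} = |q|^{−2s}·c_{r−1,s} − |q|^{−2s}·c_{r−1,s+1}; and (ii) c_{r,s} = |q|^{2r}·d_{r,s} = |q|^{2r}·(1−|q|²) / ((1−|q|^{2(r+s+1)}) · binom(r+s,s)_{|q|²}). -/

import Mathlib

open scoped ComplexConjugate

noncomputable section

/-- The Hilbert space `H = ℓ²(ℕ × ℤ × ℤ)` over `ℂ`. -/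
abbrev H : Type := lp (fun _ : ℕ × ℤ × ℤ => ℂ) 2

/-- The standard orthonormal basis vectors of `H`. -/
noncomputable def e (i : ℕ × ℤ × ℤ) : H := lp.single 2 i 1

/-- The Haar state `h(x) = (1-|q|²) Σ_{n≥0} |q|^{2n} ⟨e_{n,0,0}, x e_{n,0,0}⟩`. -/
noncomputable def haar (q : ℂ) (x : H →L[ℂ] H) : ℂ :=
  (1 - (‖q‖ : ℂ) ^ 2) *
    ∑' n : ℕ, ((‖q‖ : ℂ) ^ (2 * n)) *
      inner (𝕜 := ℂ) (e (n, 0, 0)) (x (e (n, 0, 0)))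

/-- The q-Pochhammer symbol `(α; t)_n = Π_{r=0}^{n-1} (1 - α tʳ)`. -/
noncomputable def qPoch (α t : ℂ) (n : ℕ) : ℂ := ∏ r ∈ Finset.range n, (1 - α * t ^ r)

/-- The Gaussian binomial coefficient `binom(n,m)_t = (t;t)_n / ((t;t)_m (t;t)_{n-m})`. -/
noncomputable def qBinom (t : ℂ) (n m : ℕ) : ℂ :=
  qPoch t t n / (qPoch t t m * qPoch t t (n - m))


lemma H_ext {f g : H} (h : ∀ i, f i = g i) : f = g := lp.ext (funext h)

lemma e_apply (k j : ℕ × ℤ × ℤ) : (e k) j = if j = k then 1 else 0 := by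
  unfold e
  by_cases h : j = k
  · subst h; rw [lp.single_apply_self, if_pos rfl]
  · rw [lp.single_apply_ne 2 k 1 h, if_neg h]

lemma e_coord (i : ℕ × ℤ × ℤ) (f : H) : inner (𝕜 := ℂ) (e i) f = f i := by
  unfold e
  rw [lp.inner_single_left]
  simp [RCLike.inner_apply]

lemma inner_e_e (i j : ℕ × ℤ × ℤ) : inner (𝕜 := ℂ) (e i) (e j) = if i = j then 1 else 0 := by
  rw [e_coord i (e j), e_apply j i]

lemma star_coord (T : H →L[ℂ] H) (i j : ℕ × ℤ × ℤ) :
    ((star T) (e i)) j = inner (𝕜 := ℂ) (T (e j)) (e i) := by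
  rw [← e_coord j, ContinuousLinearMap.star_eq_adjoint, ContinuousLinearMap.adjoint_inner_right]


lemma pow_apply_gen (T : H →L[ℂ] H) (coef : ℕ → ℂ) (ν : ℕ → ℕ) (ρ : ℤ)
    (hT : ∀ (n : ℕ) (r s : ℤ), T (e (n, r, s)) = coef n • e (ν n, r + ρ, s)) :
    ∀ (k : ℕ) (n : ℕ) (r s : ℤ), (T ^ k) (e (n, r, s)) =
      (∏ j ∈ Finset.range k, coef (ν^[j] n)) • e (ν^[k] n, r + (k : ℤ) * ρ, s) := by
  intro k
  induction k with
  | zero => intro n r s; simp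
  | succ k ih =>
    intro n r s
    rw [pow_succ, ContinuousLinearMap.mul_apply, hT, map_smul, ih (ν n) (r + ρ) s, smul_smul]
    have h1 : (ν^[k]) (ν n) = ν^[k + 1] n := (Function.iterate_succ_apply ν k n).symm
    have h2 : r + ρ + (k : ℤ) * ρ = r + ((k + 1 : ℕ) : ℤ) * ρ := by push_cast; ring
    have h4 : ∏ j ∈ Finset.range k, coef (ν^[j] (ν n)) = ∏ j ∈ Finset.range k, coef (ν^[j + 1] n) :=
      Finset.prod_congr rfl fun j _ => by rw [Function.iterate_succ_apply]
    rw [h1, h2, h4]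
    congr 1
    rw [Finset.prod_range_succ', Function.iterate_zero_apply]
    exact mul_comm _ _

lemma iterate_add_one (j n : ℕ) : (fun m => m + 1)^[j] n = n + j := by
  induction j with
  | zero => simp
  | succ j ih =>
    rw [Function.iterate_succ_apply', ih]
    omega

lemma iterate_sub_one (j n : ℕ) : (fun m => m - 1)^[j] n = n - j := by
  induction j with
  | zero => simp
  | succ j ih =>
    rw [Function.iterate_succ_apply', ih]
    omega

lemma starA_apply (A : H →L[ℂ] H) (α : ℝ)
    (hA : ∀ (n : ℕ) (r s : ℤ), A (e (n, r, s)) =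
      ((Real.sqrt (1 - α ^ (2 * (n + 1))) : ℝ) : ℂ) • e (n + 1, r, s))
    (n : ℕ) (r s : ℤ) :
    (star A) (e (n, r, s)) = ((Real.sqrt (1 - α ^ (2 * n)) : ℝ) : ℂ) • e (n - 1, r, s) := by
  apply H_ext
  rintro ⟨m, r', s'⟩
  rw [star_coord, hA, inner_smul_left, inner_e_e, lp.coeFn_smul, Pi.smul_apply, e_apply,
    smul_eq_mul, Complex.conj_ofReal]
  simp only [Prod.mk.injEq]
  rcases n with _ | N
  · rw [if_neg (by omega), mul_zero]
    norm_num
  · by_cases hm : m = N ∧ r' = r ∧ s' = s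
    · obtain ⟨rfl, rfl, rfl⟩ := hm
      rw [if_pos (by omega), if_pos (by omega)]
    · rw [if_neg (by omega), if_neg (by omega), mul_zero, mul_zero]

lemma starB_apply (B : H →L[ℂ] H) (q : ℂ)
    (hB : ∀ (n : ℕ) (r s : ℤ), B (e (n, r, s)) = (q ^ n) • e (n, r + 1, s))
    (n : ℕ) (r s : ℤ) :
    (star B) (e (n, r, s)) = ((conj q) ^ n) • e (n, r - 1, s) := by
  apply H_ext
  rintro ⟨m, r', s'⟩
  rw [star_coord, hB, inner_smul_left, inner_e_e, lp.coeFn_smul, Pi.smul_apply, e_apply,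
    smul_eq_mul, map_pow]
  simp only [Prod.mk.injEq]
  by_cases hm : m = n ∧ r' = r - 1 ∧ s' = s
  · obtain ⟨rfl, rfl, rfl⟩ := hm
    rw [if_pos (by omega), if_pos (by omega)]
  · rw [if_neg (by omega), if_neg (by omega), mul_zero, mul_zero]

noncomputable def Fser (t : ℂ) (r s : ℕ) : ℂ :=
  ∑' m : ℕ, t ^ (m * (s + 1)) * ∏ j ∈ Finset.range r, (1 - t ^ (m + j + 1))

lemma qPoch_eq (t : ℂ) (n : ℕ) : qPoch t t n = ∏ j ∈ Finset.range n, (1 - t ^ (j + 1)) := by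
  unfold qPoch
  exact Finset.prod_congr rfl fun j _ => by ring

lemma qPoch_succ (t : ℂ) (n : ℕ) : qPoch t t (n + 1) = qPoch t t n * (1 - t ^ (n + 1)) := by
  rw [qPoch_eq, qPoch_eq, Finset.prod_range_succ]

lemma one_sub_pow_ne {t : ℂ} (ht : ‖t‖ < 1) {k : ℕ} (hk : 1 ≤ k) : 1 - t ^ k ≠ 0 := by
  intro h
  have h1 : t ^ k = 1 := by linear_combination -h
  have hn : ‖t ^ k‖ < 1 := by
    rw [norm_pow]
    exact pow_lt_one₀ (norm_nonneg t) ht (by omega)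
  rw [h1, norm_one] at hn
  exact lt_irrefl 1 hn

lemma qPoch_ne_zero {t : ℂ} (ht : ‖t‖ < 1) (n : ℕ) : qPoch t t n ≠ 0 := by
  rw [qPoch_eq]
  exact Finset.prod_ne_zero_iff.2 fun j _ => one_sub_pow_ne ht (by omega)

lemma prod_norm_le {t : ℂ} (ht : ‖t‖ < 1) (r : ℕ) (f : ℕ → ℕ) :
    ‖∏ j ∈ Finset.range r, (1 - t ^ (f j))‖ ≤ 2 ^ r := by
  calc ‖∏ j ∈ Finset.range r, (1 - t ^ (f j))‖
      ≤ ∏ j ∈ Finset.range r, ‖1 - t ^ (f j)‖ := Finset.norm_prod_le _ _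
    _ ≤ ∏ _j ∈ Finset.range r, 2 := by
        apply Finset.prod_le_prod (fun j _ => norm_nonneg _)
        intro j _
        calc ‖1 - t ^ (f j)‖ ≤ ‖(1 : ℂ)‖ + ‖t ^ (f j)‖ := norm_sub_le _ _
          _ ≤ 1 + 1 := by
              rw [norm_one, norm_pow]
              have : ‖t‖ ^ (f j) ≤ 1 := pow_le_one₀ (norm_nonneg t) ht.le
              linarith
          _ = 2 := by norm_num
    _ = 2 ^ r := by simp

lemma Fsummable {t : ℂ} (ht : ‖t‖ < 1) (r s : ℕ) :
    Summable (fun m : ℕ => t ^ (m * (s + 1)) * ∏ j ∈ Finset.range r, (1 - t ^ (m + j + 1))) := by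
  apply Summable.of_norm_bounded (g := fun m => 2 ^ r * ‖t‖ ^ m)
  · exact (summable_geometric_of_lt_one (norm_nonneg t) ht).mul_left _
  · intro m
    rw [norm_mul, norm_pow]
    have h1 : ‖t‖ ^ (m * (s + 1)) ≤ ‖t‖ ^ m :=
      pow_le_pow_of_le_one (norm_nonneg t) ht.le (Nat.le_mul_of_pos_right m (Nat.succ_pos s))
    have h2 := prod_norm_le ht r (fun j => m + j + 1)
    calc ‖t‖ ^ (m * (s + 1)) * ‖∏ j ∈ Finset.range r, (1 - t ^ (m + j + 1))‖
        ≤ ‖t‖ ^ m * 2 ^ r := by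
          apply mul_le_mul h1 h2 (norm_nonneg _) (pow_nonneg (norm_nonneg t) m)
      _ = 2 ^ r * ‖t‖ ^ m := mul_comm _ _

lemma Fser_zero {t : ℂ} (ht : ‖t‖ < 1) (s : ℕ) : Fser t 0 s = (1 - t ^ (s + 1))⁻¹ := by
  unfold Fser
  simp only [Finset.range_zero, Finset.prod_empty, mul_one]
  rw [← tsum_geometric_of_norm_lt_one (ξ := t ^ (s + 1))
      (by rw [norm_pow]; exact pow_lt_one₀ (norm_nonneg t) ht (by omega))]
  exact tsum_congr fun m => by rw [← pow_mul, mul_comm]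

lemma Fser_succ {t : ℂ} (ht : ‖t‖ < 1) (r s : ℕ) :
    Fser t (r + 1) s = Fser t r s - t ^ (r + 1) * Fser t r (s + 1) := by
  unfold Fser
  rw [← tsum_mul_left, ← Summable.tsum_sub (Fsummable ht r s) ((Fsummable ht r (s + 1)).mul_left _)]
  apply tsum_congr
  intro m
  rw [Finset.prod_range_succ]
  ring

lemma Fser_closed {t : ℂ} (ht : ‖t‖ < 1) (r s : ℕ) :
    Fser t r s = qPoch t t r * qPoch t t s / qPoch t t (r + s + 1) := by
  induction r generalizing s with
  | zero =>
    rw [Fser_zero ht]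
    have h0 : qPoch t t 0 = 1 := by simp [qPoch]
    rw [h0, show (0 : ℕ) + s + 1 = s + 1 from by omega, qPoch_succ, one_mul]
    have hs := qPoch_ne_zero ht s
    have h1 : (1 : ℂ) - t ^ (s + 1) ≠ 0 := one_sub_pow_ne ht (by omega)
    field_simp
  | succ r ih =>
    rw [Fser_succ ht, ih s, ih (s + 1)]
    rw [show r + 1 + s + 1 = (r + s + 1) + 1 from by omega,
        show r + (s + 1) + 1 = (r + s + 1) + 1 from by omega,
        qPoch_succ t (r + s + 1), qPoch_succ t r, qPoch_succ t s]
    have hP : qPoch t t (r + s + 1) ≠ 0 := qPoch_ne_zero ht _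
    have h1 : (1 : ℂ) - t ^ (r + s + 1 + 1) ≠ 0 := one_sub_pow_ne ht (by omega)
    field_simp
    ring

lemma sqrt_prod_pair (α : ℝ) (h0 : 0 ≤ α) (h1 : α ≤ 1) (n r : ℕ) :
    (∏ j ∈ Finset.range r, ((Real.sqrt (1 - α ^ (2 * (n + j + 1))) : ℝ) : ℂ)) *
      (∏ j ∈ Finset.range r, ((Real.sqrt (1 - α ^ (2 * (n + r - j))) : ℝ) : ℂ)) =
      ∏ j ∈ Finset.range r, (1 - ((α : ℂ) ^ 2) ^ (n + j + 1)) := by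
  have hc2 : (∏ j ∈ Finset.range r, ((Real.sqrt (1 - α ^ (2 * (n + r - j))) : ℝ) : ℂ)) =
      ∏ j ∈ Finset.range r, ((Real.sqrt (1 - α ^ (2 * (n + j + 1))) : ℝ) : ℂ) := by
    rw [← Finset.prod_range_reflect (fun j => ((Real.sqrt (1 - α ^ (2 * (n + j + 1))) : ℝ) : ℂ)) r]
    apply Finset.prod_congr rfl
    intro j hj
    have hj' : j < r := Finset.mem_range.mp hj
    have he : n + (r - 1 - j) + 1 = n + r - j := by omega
    rw [he]
  rw [hc2, ← Finset.prod_mul_distrib]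
  apply Finset.prod_congr rfl
  intro j _
  have hle : α ^ (2 * (n + j + 1)) ≤ 1 := pow_le_one₀ h0 h1
  have hx : (0 : ℝ) ≤ 1 - α ^ (2 * (n + j + 1)) := by linarith
  rw [← Complex.ofReal_mul, Real.mul_self_sqrt hx]
  push_cast
  rw [← pow_mul]

lemma Apow_apply (A : H →L[ℂ] H) (α : ℝ)
    (hA : ∀ (n : ℕ) (r s : ℤ), A (e (n, r, s)) =
      ((Real.sqrt (1 - α ^ (2 * (n + 1))) : ℝ) : ℂ) • e (n + 1, r, s))
    (k n : ℕ) (r s : ℤ) :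
    (A ^ k) (e (n, r, s)) =
      (∏ j ∈ Finset.range k, ((Real.sqrt (1 - α ^ (2 * (n + j + 1))) : ℝ) : ℂ)) • e (n + k, r, s) := by
  rw [pow_apply_gen A (fun m => ((Real.sqrt (1 - α ^ (2 * (m + 1))) : ℝ) : ℂ))
      (fun m => m + 1) 0 (fun n r s => by simpa using hA n r s) k n r s]
  simp [iterate_add_one]

lemma starApow_apply (A : H →L[ℂ] H) (α : ℝ)
    (hA : ∀ (n : ℕ) (r s : ℤ), A (e (n, r, s)) =
      ((Real.sqrt (1 - α ^ (2 * (n + 1))) : ℝ) : ℂ) • e (n + 1, r, s))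
    (k n : ℕ) (r s : ℤ) :
    ((star A) ^ k) (e (n, r, s)) =
      (∏ j ∈ Finset.range k, ((Real.sqrt (1 - α ^ (2 * (n - j))) : ℝ) : ℂ)) • e (n - k, r, s) := by
  rw [pow_apply_gen (star A) (fun m => ((Real.sqrt (1 - α ^ (2 * m)) : ℝ) : ℂ))
      (fun m => m - 1) 0 (fun n r s => by simpa using starA_apply A α hA n r s) k n r s]
  simp [iterate_sub_one]

lemma Bpow_apply (B : H →L[ℂ] H) (q : ℂ)
    (hB : ∀ (n : ℕ) (r s : ℤ), B (e (n, r, s)) = (q ^ n) • e (n, r + 1, s))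
    (k n : ℕ) (r s : ℤ) :
    (B ^ k) (e (n, r, s)) = (q ^ (n * k)) • e (n, r + k, s) := by
  rw [pow_apply_gen B (fun m => q ^ m) id 1 (fun n r s => by simpa using hB n r s) k n r s]
  simp [Function.iterate_id, Finset.prod_const, ← pow_mul]

lemma starBpow_apply (B : H →L[ℂ] H) (q : ℂ)
    (hB : ∀ (n : ℕ) (r s : ℤ), B (e (n, r, s)) = (q ^ n) • e (n, r + 1, s))
    (k n : ℕ) (r s : ℤ) :
    ((star B) ^ k) (e (n, r, s)) = ((conj q) ^ (n * k)) • e (n, r - k, s) := by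
  rw [pow_apply_gen (star B) (fun m => (conj q) ^ m) id (-1)
      (fun n r s => by simpa [sub_eq_add_neg] using starB_apply B q hB n r s) k n r s]
  simp [Function.iterate_id, Finset.prod_const, ← pow_mul, mul_neg_one, ← sub_eq_add_neg]

set_option maxHeartbeats 2000000 in
/-- the recursion and closed formula for `c_{r,s} = conj(h(AʳBˢ(B*)ˢ(A*)ʳ))`. -/
theorem stmt6 (q : ℂ) (hq0 : 0 < ‖q‖) (hq1 : ‖q‖ < 1)
    (A B D : H →L[ℂ] H)
    (hA : ∀ (n : ℕ) (r s : ℤ), A (e (n, r, s)) =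
      ((Real.sqrt (1 - ‖q‖ ^ (2 * (n + 1))) : ℝ) : ℂ) • e (n + 1, r, s))
    (hB : ∀ (n : ℕ) (r s : ℤ), B (e (n, r, s)) = (q ^ n) • e (n, r + 1, s))
    (hD : ∀ (n : ℕ) (r s : ℤ), D (e (n, r, s)) =
      ((conj q / (‖q‖ : ℂ)) ^ (2 * r)) • e (n, r, s + 1))
    (c d : ℕ → ℕ → ℂ)
    (hc : ∀ r s : ℕ, c r s = conj (haar q (A ^ r * B ^ s * (star B) ^ s * (star A) ^ r)))
    (hd : ∀ r s : ℕ, d r s = haar q ((star B) ^ s * (star A) ^ r * A ^ r * B ^ s)) :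
    (∀ r s : ℕ, 1 ≤ r →
      c r s = (‖q‖ : ℂ) ^ (-(2 * (s : ℤ))) * c (r - 1) s -
        (‖q‖ : ℂ) ^ (-(2 * (s : ℤ))) * c (r - 1) (s + 1)) ∧
    (∀ r s : ℕ,
      c r s = (‖q‖ : ℂ) ^ (2 * r) * d r s ∧
      c r s = (‖q‖ : ℂ) ^ (2 * r) * (1 - (‖q‖ : ℂ) ^ 2) /
        ((1 - (‖q‖ : ℂ) ^ (2 * (r + s + 1))) *
          qBinom ((‖q‖ : ℂ) ^ 2) (r + s) s)) := by
  set α : ℝ := ‖q‖ with hα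
  clear_value α
  have hα0 : (0:ℝ) ≤ α := hq0.le
  have hT : ‖((α : ℝ) : ℂ) ^ 2‖ < 1 := by
    rw [norm_pow, Complex.norm_real, Real.norm_eq_abs, abs_of_nonneg hα0]
    exact pow_lt_one₀ hα0 hq1 two_ne_zero
  have hT0 : (((α : ℝ) : ℂ)) ^ 2 ≠ 0 :=
    pow_ne_zero _ (Complex.ofReal_ne_zero.mpr hq0.ne')
  have hApow := Apow_apply A α hA
  have hstarApow := starApow_apply A α hA
  have hBpow := Bpow_apply B q hB
  have hstarBpow := starBpow_apply B q hB
  have hqc : ∀ m : ℕ, q ^ m * (conj q) ^ m = (((α : ℝ) : ℂ) ^ 2) ^ m := by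
    intro m
    rw [← mul_pow, Complex.mul_conj, Complex.normSq_eq_norm_sq, ← hα]
    norm_cast
  -- inner product for the d-type expression
  have key_d : ∀ (r s n : ℕ), inner (𝕜 := ℂ) (e (n, 0, 0))
      (((star B) ^ s * (star A) ^ r * A ^ r * B ^ s) (e (n, 0, 0))) =
      (((α : ℝ) : ℂ) ^ 2) ^ (n * s) *
        ∏ j ∈ Finset.range r, (1 - (((α : ℝ) : ℂ) ^ 2) ^ (n + j + 1)) := by
    intro r s n
    rw [ContinuousLinearMap.mul_apply, ContinuousLinearMap.mul_apply,
      ContinuousLinearMap.mul_apply, hBpow s n 0 0]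
    simp only [map_smul]
    rw [hApow r n _ 0]
    simp only [map_smul]
    rw [hstarApow r (n + r) _ 0]
    simp only [map_smul]
    rw [show n + r - r = n from by omega]
    rw [hstarBpow s n _ 0]
    have hidx : ((n : ℕ), ((0 : ℤ) + (s : ℤ) - (s : ℤ)), (0 : ℤ)) =
        ((n : ℕ), (0 : ℤ), (0 : ℤ)) := by simp
    rw [hidx]
    simp only [inner_smul_right, inner_e_e, if_pos rfl, if_true]
    rw [show ∀ a b c d : ℂ, a * (b * (c * (d * 1))) = (a * d) * (b * c) from
      fun a b c d => by ring]
    rw [hqc (n * s), sqrt_prod_pair α hα0 hq1.le n r]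
  -- inner product for the c-type expression
  have key_c : ∀ (r s n : ℕ), inner (𝕜 := ℂ) (e (n, 0, 0))
      ((A ^ r * B ^ s * (star B) ^ s * (star A) ^ r) (e (n, 0, 0))) =
      if r ≤ n then (((α : ℝ) : ℂ) ^ 2) ^ ((n - r) * s) *
        ∏ j ∈ Finset.range r, (1 - (((α : ℝ) : ℂ) ^ 2) ^ (n - r + j + 1)) else 0 := by
    intro r s n
    by_cases hn : r ≤ n
    · rw [if_pos hn]
      rw [ContinuousLinearMap.mul_apply, ContinuousLinearMap.mul_apply,
        ContinuousLinearMap.mul_apply, hstarApow r n 0 0]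
      simp only [map_smul]
      rw [hstarBpow s (n - r) 0 0]
      simp only [map_smul]
      rw [hBpow s (n - r) _ 0]
      simp only [map_smul]
      rw [hApow r (n - r) _ 0]
      have hidx : ((n - r + r : ℕ), ((0 : ℤ) - (s : ℤ) + (s : ℤ)), (0 : ℤ)) =
          ((n : ℕ), (0 : ℤ), (0 : ℤ)) := by simp [Nat.sub_add_cancel hn]
      rw [hidx]
      simp only [inner_smul_right, inner_e_e, if_pos rfl, if_true]
      have hc2 : (∏ j ∈ Finset.range r, ((Real.sqrt (1 - α ^ (2 * (n - j))) : ℝ) : ℂ)) =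
          ∏ j ∈ Finset.range r, ((Real.sqrt (1 - α ^ (2 * (n - r + r - j))) : ℝ) : ℂ) := by
        apply Finset.prod_congr rfl
        intro j hj
        have hj' : j < r := Finset.mem_range.mp hj
        rw [show (n : ℕ) - j = n - r + r - j from by omega]
      rw [hc2]
      rw [show ∀ a b c d : ℂ, a * (b * (c * (d * 1))) = (c * b) * (d * a) from
        fun a b c d => by ring]
      rw [hqc ((n - r) * s), sqrt_prod_pair α hα0 hq1.le (n - r) r]
    · rw [if_neg hn]
      have hz : ((star A) ^ r) (e (n, 0, 0)) = 0 := by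
        rw [hstarApow r n 0 0]
        have hp : (∏ j ∈ Finset.range r, ((Real.sqrt (1 - α ^ (2 * (n - j))) : ℝ) : ℂ)) = 0 :=
          Finset.prod_eq_zero (i := n) (Finset.mem_range.mpr (by omega)) (by simp [Nat.sub_self])
        rw [hp, zero_smul]
      rw [ContinuousLinearMap.mul_apply, ContinuousLinearMap.mul_apply,
        ContinuousLinearMap.mul_apply, hz, map_zero, map_zero, map_zero, inner_zero_right]
  -- Haar values
  have Hd : ∀ r s : ℕ, haar q ((star B) ^ s * (star A) ^ r * A ^ r * B ^ s) =
      (1 - ((α : ℝ) : ℂ) ^ 2) * Fser (((α : ℝ) : ℂ) ^ 2) r s := by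
    intro r s
    unfold haar Fser
    rw [← hα]
    congr 1
    apply tsum_congr
    intro n
    rw [key_d r s n, pow_mul]
    ring
  have Hc : ∀ r s : ℕ, haar q (A ^ r * B ^ s * (star B) ^ s * (star A) ^ r) =
      (1 - ((α : ℝ) : ℂ) ^ 2) * ((((α : ℝ) : ℂ) ^ 2) ^ r * Fser (((α : ℝ) : ℂ) ^ 2) r s) := by
    intro r s
    unfold haar Fser
    rw [← hα]
    congr 1
    have step1 : (∑' n : ℕ, ((α : ℝ) : ℂ) ^ (2 * n) * inner (𝕜 := ℂ) (e (n, 0, 0))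
        ((A ^ r * B ^ s * (star B) ^ s * (star A) ^ r) (e (n, 0, 0)))) =
        ∑' n : ℕ, ((((α : ℝ) : ℂ) ^ 2) ^ n *
          if r ≤ n then (((α : ℝ) : ℂ) ^ 2) ^ ((n - r) * s) *
            ∏ j ∈ Finset.range r, (1 - (((α : ℝ) : ℂ) ^ 2) ^ (n - r + j + 1)) else 0) :=
      tsum_congr fun n => by rw [key_c r s n, pow_mul]
    rw [step1]
    have hWs : Summable (fun n : ℕ => ((((α : ℝ) : ℂ) ^ 2) ^ n *
        if r ≤ n then (((α : ℝ) : ℂ) ^ 2) ^ ((n - r) * s) *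
          ∏ j ∈ Finset.range r, (1 - (((α : ℝ) : ℂ) ^ 2) ^ (n - r + j + 1)) else 0)) := by
      apply Summable.of_norm_bounded (g := fun n => 2 ^ r * ‖(((α : ℝ) : ℂ) ^ 2)‖ ^ n)
      · exact (summable_geometric_of_lt_one (norm_nonneg _) hT).mul_left _
      · intro n
        by_cases h : r ≤ n
        · rw [if_pos h, norm_mul, norm_pow, norm_mul]
          have h1 : ‖((((α : ℝ) : ℂ)) ^ 2) ^ ((n - r) * s)‖ ≤ 1 := by
            rw [norm_pow]
            exact pow_le_one₀ (norm_nonneg _) hT.le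
          have h3 : ‖∏ j ∈ Finset.range r, (1 - (((α : ℝ) : ℂ) ^ 2) ^ (n - r + j + 1))‖ ≤ 2 ^ r :=
            prod_norm_le hT r _
          have h4 : (0:ℝ) ≤ ‖(((α : ℝ) : ℂ) ^ 2)‖ ^ n := pow_nonneg (norm_nonneg _) _
          have h7 : ‖((((α : ℝ) : ℂ)) ^ 2) ^ ((n - r) * s)‖ *
              ‖∏ j ∈ Finset.range r, (1 - (((α : ℝ) : ℂ) ^ 2) ^ (n - r + j + 1))‖ ≤ 2 ^ r := by
            have h8 := mul_le_mul h1 h3 (norm_nonneg _) zero_le_one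
            linarith
          calc ‖(((α : ℝ) : ℂ) ^ 2)‖ ^ n * (‖((((α : ℝ) : ℂ)) ^ 2) ^ ((n - r) * s)‖ *
                ‖∏ j ∈ Finset.range r, (1 - (((α : ℝ) : ℂ) ^ 2) ^ (n - r + j + 1))‖)
              ≤ ‖(((α : ℝ) : ℂ) ^ 2)‖ ^ n * 2 ^ r := mul_le_mul_of_nonneg_left h7 h4
            _ = 2 ^ r * ‖(((α : ℝ) : ℂ) ^ 2)‖ ^ n := mul_comm _ _
        · rw [if_neg h, mul_zero, norm_zero]
          positivity
    rw [← Summable.sum_add_tsum_nat_add r hWs]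
    rw [Finset.sum_eq_zero (fun i hi => by
      have := Finset.mem_range.mp hi
      rw [if_neg (by omega), mul_zero]), zero_add]
    rw [← tsum_mul_left]
    apply tsum_congr
    intro m
    rw [if_pos (by omega : r ≤ m + r), show m + r - r = m from by omega]
    ring
  -- conjugation-invariance of the closed form
  have hct : (starRingEnd ℂ) (((α : ℝ) : ℂ) ^ 2) = ((α : ℝ) : ℂ) ^ 2 := by
    rw [map_pow, Complex.conj_ofReal]
  have hqP : ∀ n : ℕ, (starRingEnd ℂ) (qPoch (((α : ℝ) : ℂ) ^ 2) (((α : ℝ) : ℂ) ^ 2) n) =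
      qPoch (((α : ℝ) : ℂ) ^ 2) (((α : ℝ) : ℂ) ^ 2) n := by
    intro n
    unfold qPoch
    rw [map_prod]
    exact Finset.prod_congr rfl fun j _ => by
      rw [map_sub, map_one, map_mul, map_pow (starRingEnd ℂ) (((α : ℝ) : ℂ) ^ 2) j, hct]
  have hcval : ∀ r s : ℕ, c r s = (1 - ((α : ℝ) : ℂ) ^ 2) * ((((α : ℝ) : ℂ) ^ 2) ^ r *
      (qPoch (((α : ℝ) : ℂ) ^ 2) (((α : ℝ) : ℂ) ^ 2) r *
        qPoch (((α : ℝ) : ℂ) ^ 2) (((α : ℝ) : ℂ) ^ 2) s /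
        qPoch (((α : ℝ) : ℂ) ^ 2) (((α : ℝ) : ℂ) ^ 2) (r + s + 1))) := by
    intro r s
    rw [hc r s, Hc r s, Fser_closed hT r s]
    rw [map_mul, map_mul, map_div₀, map_mul, map_sub, map_one,
      map_pow (starRingEnd ℂ) (((α : ℝ) : ℂ) ^ 2) r, hqP r, hqP s, hqP (r + s + 1), hct]
  have hdval : ∀ r s : ℕ, d r s = (1 - ((α : ℝ) : ℂ) ^ 2) *
      (qPoch (((α : ℝ) : ℂ) ^ 2) (((α : ℝ) : ℂ) ^ 2) r *
        qPoch (((α : ℝ) : ℂ) ^ 2) (((α : ℝ) : ℂ) ^ 2) s /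
        qPoch (((α : ℝ) : ℂ) ^ 2) (((α : ℝ) : ℂ) ^ 2) (r + s + 1)) := by
    intro r s
    rw [hd r s, Hd r s, Fser_closed hT r s]
  constructor
  · -- the recursion
    intro r s hr
    obtain ⟨r', rfl⟩ : ∃ r', r = r' + 1 := ⟨r - 1, by omega⟩
    simp only [Nat.add_sub_cancel]
    rw [hcval, hcval, hcval]
    have hz : (((α : ℝ) : ℂ)) ^ (-(2 * (s : ℤ))) = (((((α : ℝ) : ℂ)) ^ 2) ^ s)⁻¹ := by
      rw [zpow_neg, show (2 * (s : ℤ)) = ((2 * s : ℕ) : ℤ) from by push_cast; ring,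
        zpow_natCast, pow_mul]
    rw [hz]
    rw [show r' + 1 + s + 1 = (r' + s + 1) + 1 from by omega,
        show r' + (s + 1) + 1 = (r' + s + 1) + 1 from by omega,
        qPoch_succ (((α : ℝ) : ℂ) ^ 2) (r' + s + 1), qPoch_succ (((α : ℝ) : ℂ) ^ 2) r',
        qPoch_succ (((α : ℝ) : ℂ) ^ 2) s]
    have h1 := qPoch_ne_zero hT (r' + s + 1)
    have h2 := qPoch_ne_zero hT r'
    have h3 := qPoch_ne_zero hT s
    have h4 : (1 : ℂ) - (((α : ℝ) : ℂ) ^ 2) ^ (r' + s + 1 + 1) ≠ 0 := one_sub_pow_ne hT (by omega)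
    have h5 : (1 : ℂ) - (((α : ℝ) : ℂ) ^ 2) ^ (s + 1) ≠ 0 := one_sub_pow_ne hT (by omega)
    have h6 : (1 : ℂ) - (((α : ℝ) : ℂ) ^ 2) ^ (r' + 1) ≠ 0 := one_sub_pow_ne hT (by omega)
    field_simp
    ring
  · intro r s
    constructor
    · rw [hcval, hdval, pow_mul]
      ring
    · rw [hcval, pow_mul, pow_mul]
      unfold qBinom
      rw [show r + s - s = r from by omega]
      rw [qPoch_succ (((α : ℝ) : ℂ) ^ 2) (r + s)]
      have h1 := qPoch_ne_zero hT (r + s)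
      have h2 := qPoch_ne_zero hT r
      have h3 := qPoch_ne_zero hT s
      have h4 : (1 : ℂ) - (((α : ℝ) : ℂ) ^ 2) ^ (r + s + 1) ≠ 0 := one_sub_pow_ne hT (by omega)
      field_simp
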